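/- arXiv:1301.2682 — 8 statements merged into one kernel-verified Lean document; each statement's English description precedes it below -/
import Mathlib

section
/- The symplectic Dirac operator D_s = i q ∂_y − ∂_x ∂_q commutes with the operator ρ(H) = −x∂_x + y∂_y + q∂_q + 1/2, i.e. [D_s, ρ(H)] = 0 as operators on smooth functions of (x,y,q). -/
noncomputable section

def px (f : ℝ → ℝ → ℝ → ℂ) : ℝ → ℝ → ℝ → ℂ := fun x y q => deriv (fun t => f t y q) x
def py (f : ℝ → ℝ → ℝ → ℂ) : ℝ → ℝ → ℝ → ℂ := fun x y q => deriv (fun t => f x t q) y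
def pq (f : ℝ → ℝ → ℝ → ℂ) : ℝ → ℝ → ℝ → ℂ := fun x y q => deriv (fun t => f x y t) q

def Smooth3 (f : ℝ → ℝ → ℝ → ℂ) : Prop :=
  ContDiff ℝ (⊤ : ℕ∞) (fun p : ℝ × ℝ × ℝ => f p.1 p.2.1 p.2.2)

/-- X_s = y ∂_q + i x q -/
def Xs (f : ℝ → ℝ → ℝ → ℂ) : ℝ → ℝ → ℝ → ℂ :=
  fun x y q => (y : ℂ) * pq f x y q + Complex.I * x * q * f x y q

/-- D_s = i q ∂_y − ∂_x ∂_q -/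
def Ds (f : ℝ → ℝ → ℝ → ℂ) : ℝ → ℝ → ℝ → ℂ :=
  fun x y q => Complex.I * q * py f x y q - px (pq f) x y q

/-- ρ(X) = −y ∂_x − (i/2) q² -/
def rhoX (f : ℝ → ℝ → ℝ → ℂ) : ℝ → ℝ → ℝ → ℂ :=
  fun x y q => -(y : ℂ) * px f x y q - Complex.I / 2 * q ^ 2 * f x y q

/-- ρ(Y) = −x ∂_y − (i/2) ∂_q² -/
def rhoY (f : ℝ → ℝ → ℝ → ℂ) : ℝ → ℝ → ℝ → ℂ :=
  fun x y q => -(x : ℂ) * py f x y q - Complex.I / 2 * pq (pq f) x y q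

/-- ρ(H) = −x ∂_x + y ∂_y + q ∂_q + 1/2 -/
def rhoH (f : ℝ → ℝ → ℝ → ℂ) : ℝ → ℝ → ℝ → ℂ :=
  fun x y q => -(x : ℂ) * px f x y q + (y : ℂ) * py f x y q + (q : ℂ) * pq f x y q
    + (1 / 2 : ℂ) * f x y q

namespace DsAux

def unc (f : ℝ → ℝ → ℝ → ℂ) : ℝ × ℝ × ℝ → ℂ := fun p => f p.1 p.2.1 p.2.2

class S3 (f : ℝ → ℝ → ℝ → ℂ) : Prop where
  out : Smooth3 f

lemma S3.unc_contDiff (f : ℝ → ℝ → ℝ → ℂ) [S3 f] : ContDiff ℝ (⊤ : ℕ∞) (unc f) := S3.out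

instance S3.add (g h : ℝ → ℝ → ℝ → ℂ) [S3 g] [S3 h] :
    S3 (fun x y q => g x y q + h x y q) :=
  ⟨(S3.out (f := g)).add (S3.out (f := h))⟩

instance S3.sub (g h : ℝ → ℝ → ℝ → ℂ) [S3 g] [S3 h] :
    S3 (fun x y q => g x y q - h x y q) :=
  ⟨(S3.out (f := g)).sub (S3.out (f := h))⟩

instance S3.mul (g h : ℝ → ℝ → ℝ → ℂ) [S3 g] [S3 h] :
    S3 (fun x y q => g x y q * h x y q) :=
  ⟨(S3.out (f := g)).mul (S3.out (f := h))⟩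

instance S3.neg (g : ℝ → ℝ → ℝ → ℂ) [S3 g] : S3 (fun x y q => -(g x y q)) :=
  ⟨(S3.out (f := g)).neg⟩

instance S3.const (c : ℂ) : S3 (fun _ _ _ => c) := ⟨contDiff_const⟩

instance S3.X : S3 (fun x _ _ => (x : ℂ)) :=
  ⟨Complex.ofRealCLM.contDiff.comp contDiff_fst⟩

instance S3.Y : S3 (fun _ y _ => (y : ℂ)) :=
  ⟨Complex.ofRealCLM.contDiff.comp (contDiff_fst.comp contDiff_snd)⟩

instance S3.Q : S3 (fun _ _ q => (q : ℂ)) :=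
  ⟨Complex.ofRealCLM.contDiff.comp (contDiff_snd.comp contDiff_snd)⟩

-- slice differentiability
lemma diffX (f : ℝ → ℝ → ℝ → ℂ) [S3 f] (y q : ℝ) :
    Differentiable ℝ (fun t => f t y q) := by
  have : ContDiff ℝ (⊤ : ℕ∞) (fun t : ℝ => unc f (t, y, q)) :=
    (S3.unc_contDiff f).comp (ContDiff.prodMk contDiff_id contDiff_const)
  exact this.differentiable (by simp)

lemma diffY (f : ℝ → ℝ → ℝ → ℂ) [S3 f] (x q : ℝ) :
    Differentiable ℝ (fun t => f x t q) := by
  have : ContDiff ℝ (⊤ : ℕ∞) (fun t : ℝ => unc f (x, t, q)) :=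
    (S3.unc_contDiff f).comp (ContDiff.prodMk contDiff_const (ContDiff.prodMk contDiff_id contDiff_const))
  exact this.differentiable (by simp)

lemma diffQ (f : ℝ → ℝ → ℝ → ℂ) [S3 f] (x y : ℝ) :
    Differentiable ℝ (fun t => f x y t) := by
  have : ContDiff ℝ (⊤ : ℕ∞) (fun t : ℝ => unc f (x, y, t)) :=
    (S3.unc_contDiff f).comp (ContDiff.prodMk contDiff_const (ContDiff.prodMk contDiff_const contDiff_id))
  exact this.differentiable (by simp)

-- fderiv representations
lemma px_eq (f : ℝ → ℝ → ℝ → ℂ) [S3 f] (x y q : ℝ) :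
    px f x y q = fderiv ℝ (unc f) (x, y, q) (1, 0, 0) := by
  have h1 : HasDerivAt (fun t : ℝ => ((t, y, q) : ℝ × ℝ × ℝ)) (1, 0, 0) x :=
    (hasDerivAt_id x).prodMk ((hasDerivAt_const x y).prodMk (hasDerivAt_const x q))
  have hd : HasFDerivAt (unc f) (fderiv ℝ (unc f) (x, y, q)) (x, y, q) :=
    (((S3.unc_contDiff f).differentiable (by simp)) (x, y, q)).hasFDerivAt
  exact (hd.comp_hasDerivAt x h1).deriv

lemma py_eq (f : ℝ → ℝ → ℝ → ℂ) [S3 f] (x y q : ℝ) :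
    py f x y q = fderiv ℝ (unc f) (x, y, q) (0, 1, 0) := by
  have h1 : HasDerivAt (fun t : ℝ => ((x, t, q) : ℝ × ℝ × ℝ)) (0, 1, 0) y :=
    (hasDerivAt_const y x).prodMk ((hasDerivAt_id y).prodMk (hasDerivAt_const y q))
  have hd : HasFDerivAt (unc f) (fderiv ℝ (unc f) (x, y, q)) (x, y, q) :=
    (((S3.unc_contDiff f).differentiable (by simp)) (x, y, q)).hasFDerivAt
  exact (hd.comp_hasDerivAt y h1).deriv

lemma pq_eq (f : ℝ → ℝ → ℝ → ℂ) [S3 f] (x y q : ℝ) :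
    pq f x y q = fderiv ℝ (unc f) (x, y, q) (0, 0, 1) := by
  have h1 : HasDerivAt (fun t : ℝ => ((x, y, t) : ℝ × ℝ × ℝ)) (0, 0, 1) q :=
    (hasDerivAt_const q x).prodMk ((hasDerivAt_const q y).prodMk (hasDerivAt_id q))
  have hd : HasFDerivAt (unc f) (fderiv ℝ (unc f) (x, y, q)) (x, y, q) :=
    (((S3.unc_contDiff f).differentiable (by simp)) (x, y, q)).hasFDerivAt
  exact (hd.comp_hasDerivAt q h1).deriv

instance instS3px (f : ℝ → ℝ → ℝ → ℂ) [S3 f] : S3 (px f) := by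
  refine ⟨?_⟩
  have h : (fun p : ℝ × ℝ × ℝ => px f p.1 p.2.1 p.2.2)
      = fun p => fderiv ℝ (unc f) p (1, 0, 0) := by
    funext p
    rw [px_eq f p.1 p.2.1 p.2.2]
  show ContDiff ℝ (⊤ : ℕ∞) (fun p : ℝ × ℝ × ℝ => px f p.1 p.2.1 p.2.2)
  rw [h]
  exact ((S3.unc_contDiff f).fderiv_right (by simp)).clm_apply contDiff_const

instance instS3py (f : ℝ → ℝ → ℝ → ℂ) [S3 f] : S3 (py f) := by
  refine ⟨?_⟩
  have h : (fun p : ℝ × ℝ × ℝ => py f p.1 p.2.1 p.2.2)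
      = fun p => fderiv ℝ (unc f) p (0, 1, 0) := by
    funext p
    rw [py_eq f p.1 p.2.1 p.2.2]
  show ContDiff ℝ (⊤ : ℕ∞) (fun p : ℝ × ℝ × ℝ => py f p.1 p.2.1 p.2.2)
  rw [h]
  exact ((S3.unc_contDiff f).fderiv_right (by simp)).clm_apply contDiff_const

instance instS3pq (f : ℝ → ℝ → ℝ → ℂ) [S3 f] : S3 (pq f) := by
  refine ⟨?_⟩
  have h : (fun p : ℝ × ℝ × ℝ => pq f p.1 p.2.1 p.2.2)
      = fun p => fderiv ℝ (unc f) p (0, 0, 1) := by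
    funext p
    rw [pq_eq f p.1 p.2.1 p.2.2]
  show ContDiff ℝ (⊤ : ℕ∞) (fun p : ℝ × ℝ × ℝ => pq f p.1 p.2.1 p.2.2)
  rw [h]
  exact ((S3.unc_contDiff f).fderiv_right (by simp)).clm_apply contDiff_const

-- mixed second derivative symmetry
lemma mixed (f : ℝ → ℝ → ℝ → ℂ) [S3 f] (p : ℝ × ℝ × ℝ) (v w : ℝ × ℝ × ℝ) :
    fderiv ℝ (fun z => fderiv ℝ (unc f) z w) p v
      = fderiv ℝ (fun z => fderiv ℝ (unc f) z v) p w := by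
  have hd : ∀ z, HasFDerivAt (unc f) (fderiv ℝ (unc f) z) z := fun z =>
    (((S3.unc_contDiff f).differentiable (by simp)) z).hasFDerivAt
  have h2 : HasFDerivAt (fderiv ℝ (unc f)) (fderiv ℝ (fderiv ℝ (unc f)) p) p :=
    ((((S3.unc_contDiff f).fderiv_right (m := (⊤ : ℕ∞)) (by simp)).differentiable (by simp)) p).hasFDerivAt
  have key : ∀ u : ℝ × ℝ × ℝ, fderiv ℝ (fun z => fderiv ℝ (unc f) z u) p
      = (ContinuousLinearMap.apply ℝ ℂ u).comp (fderiv ℝ (fderiv ℝ (unc f)) p) := by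
    intro u
    exact ((ContinuousLinearMap.apply ℝ ℂ u).hasFDerivAt.comp p h2).fderiv
  rw [key w, key v]
  simp only [ContinuousLinearMap.coe_comp', Function.comp_apply,
    ContinuousLinearMap.apply_apply]
  exact second_derivative_symmetric hd h2 v w

lemma comm_aux (f : ℝ → ℝ → ℝ → ℂ) [S3 f] (v w : ℝ × ℝ × ℝ)
    (g h : ℝ → ℝ → ℝ → ℂ) [S3 g] [S3 h]
    (hg : ∀ x y q, g x y q = fderiv ℝ (unc f) (x, y, q) w)
    (hh : ∀ x y q, h x y q = fderiv ℝ (unc f) (x, y, q) v)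
    (Dg Dh : ℝ → ℝ → ℝ → ℂ)
    (hDg : ∀ x y q, Dg x y q = fderiv ℝ (unc g) (x, y, q) v)
    (hDh : ∀ x y q, Dh x y q = fderiv ℝ (unc h) (x, y, q) w) :
    Dg = Dh := by
  funext x y q
  have hug : unc g = fun z => fderiv ℝ (unc f) z w := by
    funext p; exact hg p.1 p.2.1 p.2.2
  have huh : unc h = fun z => fderiv ℝ (unc f) z v := by
    funext p; exact hh p.1 p.2.1 p.2.2
  rw [hDg x y q, hDh x y q, hug, huh]
  exact mixed f (x, y, q) v w

@[simp] lemma py_px (f : ℝ → ℝ → ℝ → ℂ) [S3 f] : py (px f) = px (py f) :=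
  comm_aux f (0, 1, 0) (1, 0, 0) (px f) (py f) (px_eq f) (py_eq f) _ _
    (py_eq (px f)) (px_eq (py f))

@[simp] lemma pq_px (f : ℝ → ℝ → ℝ → ℂ) [S3 f] : pq (px f) = px (pq f) :=
  comm_aux f (0, 0, 1) (1, 0, 0) (px f) (pq f) (px_eq f) (pq_eq f) _ _
    (pq_eq (px f)) (px_eq (pq f))

@[simp] lemma pq_py (f : ℝ → ℝ → ℝ → ℂ) [S3 f] : pq (py f) = py (pq f) :=
  comm_aux f (0, 0, 1) (0, 1, 0) (py f) (pq f) (py_eq f) (pq_eq f) _ _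
    (pq_eq (py f)) (py_eq (pq f))

-- linearity and product rules
@[simp] lemma px_add (g h : ℝ → ℝ → ℝ → ℂ) [S3 g] [S3 h] :
    px (fun x y q => g x y q + h x y q)
      = fun x y q => px g x y q + px h x y q := by
  funext x y q
  exact deriv_add (diffX g y q x) (diffX h y q x)

@[simp] lemma py_add (g h : ℝ → ℝ → ℝ → ℂ) [S3 g] [S3 h] :
    py (fun x y q => g x y q + h x y q)
      = fun x y q => py g x y q + py h x y q := by
  funext x y q
  exact deriv_add (diffY g x q y) (diffY h x q y)

@[simp] lemma pq_add (g h : ℝ → ℝ → ℝ → ℂ) [S3 g] [S3 h] :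
    pq (fun x y q => g x y q + h x y q)
      = fun x y q => pq g x y q + pq h x y q := by
  funext x y q
  exact deriv_add (diffQ g x y q) (diffQ h x y q)

@[simp] lemma px_sub (g h : ℝ → ℝ → ℝ → ℂ) [S3 g] [S3 h] :
    px (fun x y q => g x y q - h x y q)
      = fun x y q => px g x y q - px h x y q := by
  funext x y q
  exact deriv_sub (diffX g y q x) (diffX h y q x)

@[simp] lemma py_sub (g h : ℝ → ℝ → ℝ → ℂ) [S3 g] [S3 h] :
    py (fun x y q => g x y q - h x y q)
      = fun x y q => py g x y q - py h x y q := by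
  funext x y q
  exact deriv_sub (diffY g x q y) (diffY h x q y)

@[simp] lemma pq_sub (g h : ℝ → ℝ → ℝ → ℂ) [S3 g] [S3 h] :
    pq (fun x y q => g x y q - h x y q)
      = fun x y q => pq g x y q - pq h x y q := by
  funext x y q
  exact deriv_sub (diffQ g x y q) (diffQ h x y q)

@[simp] lemma px_mul (g h : ℝ → ℝ → ℝ → ℂ) [S3 g] [S3 h] :
    px (fun x y q => g x y q * h x y q)
      = fun x y q => px g x y q * h x y q + g x y q * px h x y q := by
  funext x y q
  exact deriv_mul (diffX g y q x) (diffX h y q x)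

@[simp] lemma py_mul (g h : ℝ → ℝ → ℝ → ℂ) [S3 g] [S3 h] :
    py (fun x y q => g x y q * h x y q)
      = fun x y q => py g x y q * h x y q + g x y q * py h x y q := by
  funext x y q
  exact deriv_mul (diffY g x q y) (diffY h x q y)

@[simp] lemma pq_mul (g h : ℝ → ℝ → ℝ → ℂ) [S3 g] [S3 h] :
    pq (fun x y q => g x y q * h x y q)
      = fun x y q => pq g x y q * h x y q + g x y q * pq h x y q := by
  funext x y q
  exact deriv_mul (diffQ g x y q) (diffQ h x y q)

@[simp] lemma px_neg (g : ℝ → ℝ → ℝ → ℂ) :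
    px (fun x y q => -(g x y q)) = fun x y q => -(px g x y q) := by
  funext x y q
  exact deriv.neg

@[simp] lemma py_neg (g : ℝ → ℝ → ℝ → ℂ) :
    py (fun x y q => -(g x y q)) = fun x y q => -(py g x y q) := by
  funext x y q
  exact deriv.neg

@[simp] lemma pq_neg (g : ℝ → ℝ → ℝ → ℂ) :
    pq (fun x y q => -(g x y q)) = fun x y q => -(pq g x y q) := by
  funext x y q
  exact deriv.neg

@[simp] lemma px_const (c : ℂ) : px (fun _ _ _ => c) = fun _ _ _ => 0 := by
  funext x y q; exact deriv_const x c

@[simp] lemma py_const (c : ℂ) : py (fun _ _ _ => c) = fun _ _ _ => 0 := by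
  funext x y q; exact deriv_const y c

@[simp] lemma pq_const (c : ℂ) : pq (fun _ _ _ => c) = fun _ _ _ => 0 := by
  funext x y q; exact deriv_const q c

lemma hasDerivAt_coe (t : ℝ) : HasDerivAt (fun s : ℝ => (s : ℂ)) 1 t := by
  simpa using (hasDerivAt_id t).ofReal_comp

@[simp] lemma px_X : px (fun x _ _ => (x : ℂ)) = fun _ _ _ => 1 := by
  funext x y q; exact (hasDerivAt_coe x).deriv

@[simp] lemma py_X : py (fun x _ _ => (x : ℂ)) = fun _ _ _ => 0 := by
  funext x y q; exact deriv_const y _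

@[simp] lemma pq_X : pq (fun x _ _ => (x : ℂ)) = fun _ _ _ => 0 := by
  funext x y q; exact deriv_const q _

@[simp] lemma px_Y : px (fun _ y _ => (y : ℂ)) = fun _ _ _ => 0 := by
  funext x y q; exact deriv_const x _

@[simp] lemma py_Y : py (fun _ y _ => (y : ℂ)) = fun _ _ _ => 1 := by
  funext x y q; exact (hasDerivAt_coe y).deriv

@[simp] lemma pq_Y : pq (fun _ y _ => (y : ℂ)) = fun _ _ _ => 0 := by
  funext x y q; exact deriv_const q _

@[simp] lemma px_Q : px (fun _ _ q => (q : ℂ)) = fun _ _ _ => 0 := by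
  funext x y q; exact deriv_const x _

@[simp] lemma py_Q : py (fun _ _ q => (q : ℂ)) = fun _ _ _ => 0 := by
  funext x y q; exact deriv_const y _

@[simp] lemma pq_Q : pq (fun _ _ q => (q : ℂ)) = fun _ _ _ => 1 := by
  funext x y q; exact (hasDerivAt_coe q).deriv

lemma Ds_def (f : ℝ → ℝ → ℝ → ℂ) :
    Ds f = fun (x y q : ℝ) => Complex.I * q * py f x y q - px (pq f) x y q := rfl

lemma rhoH_def (f : ℝ → ℝ → ℝ → ℂ) :
    rhoH f = fun (x y q : ℝ) => -(x : ℂ) * px f x y q + (y : ℂ) * py f x y q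
      + (q : ℂ) * pq f x y q + (1 / 2 : ℂ) * f x y q := rfl

end DsAux

open DsAux in
theorem Ds_commutes_rhoH (f : ℝ → ℝ → ℝ → ℂ) (hf : Smooth3 f) (x y q : ℝ) :
    Ds (rhoH f) x y q - rhoH (Ds f) x y q = 0 := by
  haveI : S3 f := ⟨hf⟩
  simp only [Ds_def, rhoH_def, px_add, py_add, pq_add, px_sub, py_sub, pq_sub,
    px_mul, py_mul, pq_mul, px_neg, py_neg, pq_neg, px_const, py_const, pq_const,
    px_X, py_X, pq_X, px_Y, py_Y, pq_Y, px_Q, py_Q, pq_Q,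
    py_px, pq_px, pq_py]
  ring

end
end

section
/- For every m ∈ ℕ, the function s(x,y,q) = e^{−q²/2}(x+iy)^m satisfies the symplectic Dirac equation D_s s = 0, where D_s = i q ∂_y − ∂_x ∂_q. -/
noncomputable section

/-- T_s = ∂_x − q ∂_q ∂_x + i q² ∂_y -/
def Ts (f : ℝ → ℝ → ℝ → ℂ) : ℝ → ℝ → ℝ → ℂ :=
  fun x y q => px f x y q - (q : ℂ) * pq (px f) x y q + Complex.I * q ^ 2 * py f x y q


/-! The Gaussian factor satisfies `E' = -q E`, and for `h` holomorphic the Cauchy–Riemann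
equations give `∂_y h(x + iy) = i ∂_x h(x + iy)`. Hence for `s = E(q) h(x + iy)` the two terms
of `D_s s` are `i q · i E h'` and `-(-q E) h'`, which cancel. -/

open Complex

lemma hasDerivAt_cexp_neg_sq_div_two (q : ℝ) :
    HasDerivAt (fun t : ℝ => cexp (-(t : ℂ) ^ 2 / 2)) (-q * cexp (-(q : ℂ) ^ 2 / 2)) q := by
  have h : HasDerivAt (fun z : ℂ => -z ^ 2 / 2) (-(q : ℂ)) (q : ℂ) :=
    (((hasDerivAt_pow 2 (q : ℂ)).neg).div_const 2).congr_deriv (by ring)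
  convert (h.cexp).comp_ofReal using 1
  ring

section HolomorphicInXPlusIY

variable {h : ℂ → ℂ} {x y : ℝ}

lemma HasDerivAt.comp_ofReal_add_I_mul_const {h' : ℂ} (hh : HasDerivAt h h' (x + I * y)) :
    HasDerivAt (fun t : ℝ => h (t + I * y)) h' x := by
  have hlin : HasDerivAt (fun z : ℂ => z + I * y) 1 (x : ℂ) := (hasDerivAt_id _).add_const _
  simpa using (hh.comp (x : ℂ) hlin).comp_ofReal

lemma HasDerivAt.comp_const_add_I_mul_ofReal {h' : ℂ} (hh : HasDerivAt h h' (x + I * y)) :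
    HasDerivAt (fun t : ℝ => h (x + I * t)) (h' * I) y := by
  have hlin : HasDerivAt (fun z : ℂ => x + I * z) I (y : ℂ) := by
    simpa using ((hasDerivAt_id _).const_mul I).const_add (x : ℂ)
  exact (hh.comp (y : ℂ) hlin).comp_ofReal

end HolomorphicInXPlusIY

theorem Ds_cexp_neg_sq_div_two_mul_holomorphic {h : ℂ → ℂ} {x y : ℝ}
    (hh : DifferentiableAt ℂ h (x + I * y)) (q : ℝ) :
    Ds (fun x y q => cexp (-(q : ℂ) ^ 2 / 2) * h (x + I * y)) x y q = 0 := by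
  have hpq : pq (fun x y q => cexp (-(q : ℂ) ^ 2 / 2) * h (x + I * y))
      = fun (x y q : ℝ) => -q * cexp (-(q : ℂ) ^ 2 / 2) * h (x + I * y) := by
    funext x y q
    exact ((hasDerivAt_cexp_neg_sq_div_two q).mul_const _).deriv
  have hpx : px (pq fun x y q => cexp (-(q : ℂ) ^ 2 / 2) * h (x + I * y)) x y q
      = -q * cexp (-(q : ℂ) ^ 2 / 2) * deriv h (x + I * y) := by
    rw [hpq]
    exact (hh.hasDerivAt.comp_ofReal_add_I_mul_const.const_mul _).deriv
  have hpy : py (fun x y q => cexp (-(q : ℂ) ^ 2 / 2) * h (x + I * y)) x y q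
      = cexp (-(q : ℂ) ^ 2 / 2) * (deriv h (x + I * y) * I) :=
    (hh.hasDerivAt.comp_const_add_I_mul_ofReal.const_mul _).deriv
  rw [Ds, hpy, hpx]
  linear_combination (q * cexp (-(q : ℂ) ^ 2 / 2) * deriv h (x + I * y)) * I_sq

theorem Ds_annihilates_exp_zpow (m : ℕ) (x y q : ℝ) :
    Ds (fun x y q => Complex.exp (-(q : ℂ) ^ 2 / 2) * ((x : ℂ) + Complex.I * y) ^ m)
      x y q = 0 :=
  Ds_cexp_neg_sq_div_two_mul_holomorphic (h := (· ^ m)) (differentiableAt_pow m) q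
end
end

section
/- For every m ∈ ℕ, the function s(x,y,q) = i q e^{−q²/2}(x+iy)^{m+1}, which equals X_s applied to e^{−q²/2}(x+iy)^m where X_s = y∂_q + i x q, satisfies the symplectic twistor equation T_s s = 0 with T_s = ∂_x − q ∂_q ∂_x + i q² ∂_y. -/
noncomputable section

/-! Write `z = x + i y`. On a product `φ(q) F(z)` with `F` holomorphic, the Cauchy–Riemann relation
`∂_y = i ∂_x` turns `T_s` into the ordinary differential operator `φ ↦ φ - q φ' - q² φ` acting on the
`q`-factor, multiplied by `F'(z)`. The factor `φ(q) = i q e^{-q²/2}` solves this ODE, whatever `F`. -/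

open Complex

section SeparatedVariables

variable (φ : ℝ → ℂ) (F : ℂ → ℂ) (x y q : ℝ)

theorem hasDerivAt_comp_add_I_mul_left (hF : DifferentiableAt ℂ F (x + I * y)) :
    HasDerivAt (fun t : ℝ => F (t + I * y)) (deriv F (x + I * y)) x := by
  have hz : HasDerivAt (fun z : ℂ => z + I * y) 1 (x : ℂ) := (hasDerivAt_id _).add_const _
  simpa using (hF.hasDerivAt.comp (x : ℂ) hz).comp_ofReal

theorem hasDerivAt_comp_add_I_mul_right (hF : DifferentiableAt ℂ F (x + I * y)) :
    HasDerivAt (fun t : ℝ => F (x + I * t)) (deriv F (x + I * y) * I) y := by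
  have hz : HasDerivAt (fun z : ℂ => x + I * z) I (y : ℂ) := by
    simpa using ((hasDerivAt_id (y : ℂ)).const_mul I).const_add (x : ℂ)
  exact (hF.hasDerivAt.comp (y : ℂ) hz).comp_ofReal

theorem px_separated (hF : DifferentiableAt ℂ F (x + I * y)) :
    px (fun x y q => φ q * F (x + I * y)) x y q = φ q * deriv F (x + I * y) := by
  simp only [px, deriv_const_mul_field, (hasDerivAt_comp_add_I_mul_left F x y hF).deriv]

theorem py_separated (hF : DifferentiableAt ℂ F (x + I * y)) :
    py (fun x y q => φ q * F (x + I * y)) x y q = φ q * (deriv F (x + I * y) * I) := by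
  simp only [py, deriv_const_mul_field, (hasDerivAt_comp_add_I_mul_right F x y hF).deriv]

theorem pq_separated :
    pq (fun x y q => φ q * F (x + I * y)) x y q = deriv φ q * F (x + I * y) :=
  deriv_mul_const_field _

theorem Xs_separated :
    Xs (fun x y q => φ q * F (x + I * y)) x y q
      = (y * deriv φ q + I * x * q * φ q) * F (x + I * y) := by
  rw [Xs, pq_separated]
  ring

theorem Ts_separated (hF : DifferentiableAt ℂ F (x + I * y)) :
    Ts (fun x y q => φ q * F (x + I * y)) x y q
      = (φ q - q * deriv φ q - q ^ 2 * φ q) * deriv F (x + I * y) := by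
  have hpx : (fun t => px (fun x y q => φ q * F (x + I * y)) x y t)
      = fun t => φ t * deriv F (x + I * y) :=
    funext fun t => px_separated φ F x y t hF
  rw [Ts, px_separated φ F x y q hF, py_separated φ F x y q hF, pq, hpx, deriv_mul_const_field]
  linear_combination (q ^ 2 * φ q * deriv F (x + I * y)) * I_sq

end SeparatedVariables

theorem hasDerivAt_gaussian (q : ℝ) :
    HasDerivAt (fun t : ℝ => exp (-(t : ℂ) ^ 2 / 2)) (-(q : ℂ) * exp (-(q : ℂ) ^ 2 / 2)) q := by
  have h : HasDerivAt (fun z : ℂ => -z ^ 2 / 2) (-(q : ℂ)) (q : ℂ) := by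
    exact ((hasDerivAt_pow 2 (q : ℂ)).neg.div_const 2).congr_deriv (by ring)
  simpa [mul_comm] using h.cexp.comp_ofReal

theorem deriv_I_mul_gaussian (q : ℝ) :
    deriv (fun t : ℝ => I * t * exp (-(t : ℂ) ^ 2 / 2)) q
      = I * (1 - q ^ 2) * exp (-(q : ℂ) ^ 2 / 2) := by
  have hid : HasDerivAt (fun t : ℝ => (t : ℂ)) 1 q := (hasDerivAt_id (q : ℂ)).comp_ofReal
  rw [((hid.const_mul I).fun_mul (hasDerivAt_gaussian q)).deriv]
  ring

theorem Ts_annihilates_Xs_monogenic (m : ℕ) (x y q : ℝ) :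
    (Complex.I * q * Complex.exp (-(q : ℂ) ^ 2 / 2) * ((x : ℂ) + Complex.I * y) ^ (m + 1)
      = Xs (fun x y q => Complex.exp (-(q : ℂ) ^ 2 / 2) * ((x : ℂ) + Complex.I * y) ^ m)
          x y q) ∧
    Ts (fun x y q =>
        Complex.I * q * Complex.exp (-(q : ℂ) ^ 2 / 2) * ((x : ℂ) + Complex.I * y) ^ (m + 1))
      x y q = 0 := by
  constructor
  · rw [Xs_separated (fun t => exp (-(t : ℂ) ^ 2 / 2)) (· ^ m), (hasDerivAt_gaussian q).deriv]
    linear_combination (q * y * exp (-(q : ℂ) ^ 2 / 2) * (x + I * y) ^ m) * I_sq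
  · rw [Ts_separated (fun t => I * t * exp (-(t : ℂ) ^ 2 / 2)) (· ^ (m + 1)) x y q
      (differentiableAt_pow _), deriv_I_mul_gaussian]
    ring
end
end

section
/- A smooth function f ∈ S(ℝ) (Schwartz class) satisfies the ODE (1 − q²) f(q) = q f′(q) if and only if f(q) = c · q e^{−q²/2} for some constant c. -/
/-!
Multiplying by the inverse Gaussian, `F q = f q * exp (q ^ 2 / 2)`, turns the equation
`(1 - q²) f = q f'` into the Euler equation `F = q F'`. Away from `0` this says that
`F q / q`, i.e. the slope of `F` between `0` and `q`, has zero derivative, so it is constant on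
each half-line; as `q → 0` that slope tends to `F' 0`, so `F q = F' 0 * q` on both sides.
-/

open Complex Set Filter Topology

section EulerEquation

variable {E : Type*} [NormedAddCommGroup E] [NormedSpace ℝ E] {F : ℝ → E}

theorem hasDerivAt_slope_zero_of_eq_smul_deriv (hF : ∀ x, F x = x • deriv F x) {x : ℝ}
    (hx : x ≠ 0) (hFx : DifferentiableAt ℝ F x) : HasDerivAt (slope F 0) 0 x := by
  have hF0 : F 0 = 0 := by simpa using hF 0
  have hslope : slope F 0 = fun y => y⁻¹ • F y := by
    ext y; simp [slope_def_module, hF0]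
  rw [hslope]
  refine ((hasDerivAt_inv hx).smul hFx.hasDerivAt).congr_deriv ?_
  rw [hF x, smul_smul, ← add_smul]
  field_simp
  simp

theorem slope_zero_eq_deriv_zero_of_eq_smul_deriv (hd : Differentiable ℝ F)
    (hF : ∀ x, F x = x • deriv F x) {s : Set ℝ} (hs : IsOpen s) (hs' : IsPreconnected s)
    (h0 : 0 ∉ s) [(𝓝[s] (0 : ℝ)).NeBot] {q : ℝ} (hq : q ∈ s) :
    slope F 0 q = deriv F 0 := by
  have hne : ∀ x ∈ s, x ≠ 0 := fun x hx h => h0 (h ▸ hx)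
  have hderiv : ∀ x ∈ s, HasDerivAt (slope F 0) 0 x := fun x hx =>
    hasDerivAt_slope_zero_of_eq_smul_deriv hF (hne x hx) (hd x)
  have hconst : ∀ x ∈ s, slope F 0 x = slope F 0 q := fun x hx =>
    hs.is_const_of_deriv_eq_zero hs'
      (fun y hy => (hderiv y hy).differentiableAt.differentiableWithinAt)
      (fun y hy => (hderiv y hy).deriv) hx hq
  have hlim : Tendsto (slope F 0) (𝓝[s] 0) (𝓝 (deriv F 0)) :=
    (hasDerivAt_iff_tendsto_slope.1 (hd 0).hasDerivAt).mono_left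
      (nhdsWithin_mono 0 hne)
  exact tendsto_nhds_unique
    (tendsto_const_nhds.congr' (eventually_nhdsWithin_of_forall fun x hx => (hconst x hx).symm))
    hlim

theorem eq_smul_deriv_zero_of_eq_smul_deriv (hd : Differentiable ℝ F)
    (hF : ∀ x, F x = x • deriv F x) (q : ℝ) : F q = q • deriv F 0 := by
  have hF0 : F 0 = 0 := by simpa using hF 0
  rcases eq_or_ne q 0 with rfl | hq
  · simp [hF0]
  have hslope : slope F 0 q = deriv F 0 := by
    rcases hq.lt_or_gt with hq | hq
    · exact slope_zero_eq_deriv_zero_of_eq_smul_deriv hd hF isOpen_Iio isPreconnected_Iio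
        self_notMem_Iio hq
    · exact slope_zero_eq_deriv_zero_of_eq_smul_deriv hd hF isOpen_Ioi isPreconnected_Ioi
        self_notMem_Ioi hq
  simpa [hF0, hslope] using (sub_smul_slope F 0 q).symm

end EulerEquation

theorem hasDerivAt_mul_cexp_sq_half {f : ℝ → ℂ} {q : ℝ} (hf : DifferentiableAt ℝ f q) :
    HasDerivAt (fun x : ℝ => f x * cexp ((x : ℂ) ^ 2 / 2))
      ((deriv f q + q * f q) * cexp ((q : ℂ) ^ 2 / 2)) q := by
  have hsq : HasDerivAt (fun x : ℝ => (x : ℂ) ^ 2 / 2) (q : ℂ) q := by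
    simpa using ((hasDerivAt_id q).ofReal_comp.pow 2).div_const 2
  refine (hf.hasDerivAt.mul hsq.cexp).congr_deriv ?_
  ring

theorem mul_cexp_sq_half_eq_iff {z w : ℂ} {q : ℝ} :
    z * cexp ((q : ℂ) ^ 2 / 2) = w ↔ z = w * Real.exp (-q ^ 2 / 2) := by
  rw [ofReal_exp]
  push_cast
  rw [neg_div, Complex.exp_neg, eq_mul_inv_iff_mul_eq₀ (Complex.exp_ne_zero _)]

theorem ode_iff_eq_mul_deriv_mul_cexp_sq_half {f : ℝ → ℂ} (hf : Differentiable ℝ f) :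
    (∀ q : ℝ, ((1 : ℂ) - (q : ℂ) ^ 2) * f q = (q : ℂ) * deriv f q) ↔
    ∀ q : ℝ, f q * cexp ((q : ℂ) ^ 2 / 2) =
      (q : ℂ) * deriv (fun x : ℝ => f x * cexp ((x : ℂ) ^ 2 / 2)) q := by
  refine forall_congr' fun q => ?_
  rw [(hasDerivAt_mul_cexp_sq_half (hf q)).deriv,
    ← mul_left_inj' (Complex.exp_ne_zero ((q : ℂ) ^ 2 / 2))]
  constructor <;> intro h <;> linear_combination h

theorem schwartz_ode_solution (f : SchwartzMap ℝ ℂ) :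
    (∀ q : ℝ, ((1 : ℂ) - (q : ℂ) ^ 2) * f q = (q : ℂ) * deriv (⇑f) q) ↔
    (∃ c : ℂ, ∀ q : ℝ, f q = c * (q : ℂ) * Real.exp (-q ^ 2 / 2)) := by
  rw [ode_iff_eq_mul_deriv_mul_cexp_sq_half f.differentiable]
  set F : ℝ → ℂ := fun x => f x * cexp ((x : ℂ) ^ 2 / 2)
  change (∀ q : ℝ, F q = q * deriv F q) ↔ _
  constructor
  · intro hode
    have hlin := eq_smul_deriv_zero_of_eq_smul_deriv
      (fun q => (hasDerivAt_mul_cexp_sq_half (f.differentiable q)).differentiableAt) hode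
    exact ⟨deriv F 0, fun q => mul_cexp_sq_half_eq_iff.1 ((hlin q).trans (mul_comm _ _))⟩
  · rintro ⟨c, hc⟩
    have hFc : F = fun x : ℝ => c * x := funext fun x => mul_cexp_sq_half_eq_iff.2 (hc x)
    intro q
    have hderiv : HasDerivAt (fun x : ℝ => c * x) c q := by
      simpa using (hasDerivAt_id q).ofReal_comp.const_mul c
    rw [hFc, hderiv.deriv, mul_comm]
end

section
/- For any entire holomorphic function h: ℂ → ℂ, the symplectic spinor s(x,y,q) = h(x+iy) · q e^{−q²/2} satisfies the symplectic twistor equation T_s s = 0, where T_s = ∂_x − q ∂_q ∂_x + i q² ∂_y. -/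
noncomputable section

/-! Writing `s = h(x + iy) · φ(q)`, holomorphy turns `∂_x` into `h'` and `∂_y` into `i h'`, so
`T_s s = h'(x + iy) · (φ - q φ' - q² φ)`. The profile `φ(q) = q e^{-q²/2}` has
`φ' = (1 - q²) e^{-q²/2}`, so `q φ' = φ - q² φ` and the bracket vanishes. -/

open Complex

section HolomorphicInRealCoordinates

variable {h : ℂ → ℂ} {x y : ℝ}

theorem DifferentiableAt.hasDerivAt_comp_horizontal (hh : DifferentiableAt ℂ h (x + I * y)) :
    HasDerivAt (fun t : ℝ => h (t + I * y)) (deriv h (x + I * y)) x := by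
  have hline : HasDerivAt (fun w : ℂ => w + I * y) 1 (x : ℂ) := (hasDerivAt_id _).add_const _
  simpa using (hh.hasDerivAt.comp (x : ℂ) hline).comp_ofReal

theorem DifferentiableAt.hasDerivAt_comp_vertical (hh : DifferentiableAt ℂ h (x + I * y)) :
    HasDerivAt (fun t : ℝ => h (x + I * t)) (I * deriv h (x + I * y)) y := by
  have hline : HasDerivAt (fun w : ℂ => x + I * w) I (y : ℂ) := by
    simpa using ((hasDerivAt_id (y : ℂ)).const_mul I).const_add (x : ℂ)
  simpa [mul_comm] using (hh.hasDerivAt.comp (y : ℂ) hline).comp_ofReal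

end HolomorphicInRealCoordinates

theorem Ts_holomorphic_mul {h : ℂ → ℂ} {φ : ℝ → ℂ} {x y q : ℝ}
    (hh : DifferentiableAt ℂ h (x + I * y)) :
    Ts (fun x y q => h (x + I * y) * φ q) x y q =
      deriv h (x + I * y) * (φ q - q * deriv φ q - q ^ 2 * φ q) := by
  have hpx : ∀ t, px (fun x y q => h (x + I * y) * φ q) x y t = deriv h (x + I * y) * φ t :=
    fun t => (hh.hasDerivAt_comp_horizontal.mul_const (φ t)).deriv
  have hpy : py (fun x y q => h (x + I * y) * φ q) x y q = I * deriv h (x + I * y) * φ q :=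
    (hh.hasDerivAt_comp_vertical.mul_const (φ q)).deriv
  have hpqpx : pq (px fun x y q => h (x + I * y) * φ q) x y q =
      deriv h (x + I * y) * deriv φ q := by
    simp only [pq, hpx, deriv_const_mul_field']
  rw [Ts, hpx, hpy, hpqpx]
  linear_combination (q : ℂ) ^ 2 * deriv h (x + I * y) * φ q * I_sq

theorem hasDerivAt_mul_cexp_neg_sq_div_two (q : ℝ) :
    HasDerivAt (fun t : ℝ => (t : ℂ) * cexp (-(t : ℂ) ^ 2 / 2))
      ((1 - (q : ℂ) ^ 2) * cexp (-(q : ℂ) ^ 2 / 2)) q := by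
  have hgauss : HasDerivAt (fun w : ℂ => cexp (-w ^ 2 / 2))
      (cexp (-(q : ℂ) ^ 2 / 2) * (-(2 * (q : ℂ)) / 2)) q := by
    simpa using ((hasDerivAt_pow 2 (q : ℂ)).neg.div_const 2).cexp
  refine ((hasDerivAt_id' (q : ℂ)).comp_ofReal.fun_mul hgauss.comp_ofReal).congr_deriv ?_
  ring

theorem Ts_annihilates_holomorphic (h : ℂ → ℂ) (hh : Differentiable ℂ h) (x y q : ℝ) :
    Ts (fun x y q => h ((x : ℂ) + Complex.I * y) * q * Complex.exp (-(q : ℂ) ^ 2 / 2))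
      x y q = 0 := by
  simp_rw [mul_assoc (h _)]
  rw [Ts_holomorphic_mul (hh _), (hasDerivAt_mul_cexp_neg_sq_div_two q).deriv]
  ring
end
end

section
/- Fix m ≥ 1 and consider coefficients a^r_k (r = 0,…,m, k even ≥ 0) with a^0_0 ≠ 0, a^0_k = 0 for k > 0, satisfying the symplectic-Dirac recursion (m−p)(k+1)a^{m−p}_k + (p+1)(k+1)a^{m−1−p}_k − 2(p+1)a^{m−1−p}_{k−2} = 0 for all p = 0,…,m−1 and all even k. Then for each r = 0,…,m the top coefficient is a^r_{2r} = (2^r/(2r+1)!!)·C(m,r)·a^0_0 and the constant term is a^r_0 = (−1)^r C(m,r) a^0_0, where (2r+1)!! is the double factorial. -/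
noncomputable section

theorem dirac_recursion_top_and_constant_coefficients
    (m : ℕ) (hm : 1 ≤ m) (a : ℤ → ℤ → ℂ)
    (hzero : ∀ r k : ℤ, k < 0 → a r k = 0)
    (ha00 : a 0 0 ≠ 0)
    (ha0 : ∀ k : ℤ, 0 < k → a 0 k = 0)
    (hrec : ∀ p : ℤ, 0 ≤ p → p ≤ (m : ℤ) - 1 → ∀ k : ℤ, Even k → 0 ≤ k →
      (((m : ℤ) - p : ℤ) : ℂ) * ((k : ℂ) + 1) * a ((m : ℤ) - p) k
        + ((p : ℂ) + 1) * ((k : ℂ) + 1) * a ((m : ℤ) - 1 - p) k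
        - 2 * ((p : ℂ) + 1) * a ((m : ℤ) - 1 - p) (k - 2) = 0) :
    ∀ r : ℕ, r ≤ m →
      a (r : ℤ) (2 * (r : ℤ)) =
        ((2 : ℂ) ^ r / ((2 * r + 1).doubleFactorial : ℂ)) * (m.choose r : ℂ) * a 0 0 ∧
      a (r : ℤ) 0 = (-1 : ℂ) ^ r * (m.choose r : ℂ) * a 0 0 := by
  -- cleaned-up recursion
  have key : ∀ n : ℕ, n + 1 ≤ m → ∀ k : ℤ, Even k → 0 ≤ k →
      ((n : ℂ) + 1) * ((k : ℂ) + 1) * a ((n : ℤ) + 1) k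
        + ((m : ℂ) - n) * ((k : ℂ) + 1) * a (n : ℤ) k
        - 2 * ((m : ℂ) - n) * a (n : ℤ) (k - 2) = 0 := by
    intro n hn k hk hk0
    have h := hrec ((m : ℤ) - n - 1) (by omega) (by omega) k hk hk0
    have e1 : (m : ℤ) - ((m : ℤ) - n - 1) = (n : ℤ) + 1 := by ring
    have e2 : (m : ℤ) - 1 - ((m : ℤ) - n - 1) = (n : ℤ) := by ring
    rw [e1, e2] at h
    push_cast at h
    linear_combination h
  -- vanishing above the top degree
  have vanish : ∀ n : ℕ, n ≤ m → ∀ k : ℤ, Even k → 2 * (n : ℤ) < k → a (n : ℤ) k = 0 := by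
    intro n
    induction n with
    | zero =>
      intro _ k _ hk
      exact ha0 k (by simpa using hk)
    | succ n ih =>
      intro hnm k hk hklt
      have h := key n (by omega) k hk (by omega)
      have h1 : a (n : ℤ) k = 0 := ih (by omega) k hk (by omega)
      have h2 : a (n : ℤ) (k - 2) = 0 := ih (by omega) (k - 2) (hk.sub even_two) (by omega)
      rw [h1, h2] at h
      have hk1 : ((k : ℂ) + 1) ≠ 0 := by
        have : ((k + 1 : ℤ) : ℂ) ≠ 0 := Int.cast_ne_zero.mpr (by omega)
        push_cast at this
        exact this
      have hn1 : ((n : ℂ) + 1) ≠ 0 := by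
        have : (((n : ℕ) + 1 : ℕ) : ℂ) ≠ 0 := Nat.cast_ne_zero.mpr (by omega)
        push_cast at this
        exact this
      have h' : ((n : ℂ) + 1) * ((k : ℂ) + 1) * a ((n : ℤ) + 1) k = 0 := by
        linear_combination h
      have e : ((n + 1 : ℕ) : ℤ) = (n : ℤ) + 1 := by push_cast; ring
      rw [e]
      rcases mul_eq_zero.mp h' with h'' | h''
      · exact absurd h'' (mul_ne_zero hn1 hk1)
      · exact h''
  intro r
  induction r with
  | zero =>
    intro _
    constructor <;> simp [Nat.doubleFactorial]
  | succ n ih =>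
    intro hnm
    obtain ⟨ihtop, ihconst⟩ := ih (by omega)
    have hD : (((2 * n + 1).doubleFactorial : ℕ) : ℂ) ≠ 0 :=
      Nat.cast_ne_zero.mpr (Nat.doubleFactorial_pos _).ne'
    have hn1 : ((n : ℂ) + 1) ≠ 0 := by
      have : (((n : ℕ) + 1 : ℕ) : ℂ) ≠ 0 := Nat.cast_ne_zero.mpr (by omega)
      push_cast at this
      exact this
    have hchoose : ((m.choose (n + 1) : ℕ) : ℂ) * ((n : ℂ) + 1)
        = (m.choose n : ℂ) * ((m : ℂ) - n) := by
      have h := congrArg (Nat.cast : ℕ → ℂ) (Nat.choose_succ_right_eq m n)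
      push_cast [Nat.cast_sub (show n ≤ m by omega)] at h
      linear_combination h
    have edf : ((2 * (n + 1) + 1).doubleFactorial : ℕ)
        = (2 * n + 3) * (2 * n + 1).doubleFactorial := by
      have e : 2 * (n + 1) + 1 = (2 * n + 1) + 2 := by ring
      rw [e, Nat.doubleFactorial_add_two]
    have eidx : ((n + 1 : ℕ) : ℤ) = (n : ℤ) + 1 := by push_cast; ring
    constructor
    · -- top coefficient
      have h := key n (by omega) (2 * (n : ℤ) + 2) ⟨(n : ℤ) + 1, by ring⟩ (by omega)
      have e2 : (2 * (n : ℤ) + 2) - 2 = 2 * (n : ℤ) := by ring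
      rw [e2] at h
      have h0 : a (n : ℤ) (2 * (n : ℤ) + 2) = 0 :=
        vanish n (by omega) _ ⟨(n : ℤ) + 1, by ring⟩ (by omega)
      rw [h0] at h
      have ihtop' : (((2 * n + 1).doubleFactorial : ℕ) : ℂ) * a (n : ℤ) (2 * (n : ℤ))
          = 2 ^ n * (m.choose n : ℂ) * a 0 0 := by
        rw [ihtop]; field_simp
      have h23 : ((2 : ℂ) * n + 3) ≠ 0 := by
        have : (((2 * n + 3 : ℕ)) : ℂ) ≠ 0 := Nat.cast_ne_zero.mpr (by omega)
        push_cast at this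
        exact this
      have ekidx : 2 * ((n + 1 : ℕ) : ℤ) = 2 * (n : ℤ) + 2 := by push_cast; ring
      rw [ekidx, eidx, edf]
      push_cast at h ⊢
      have h2' : ((n : ℂ) + 1) * ((2 * (n : ℂ) + 3) * (((2 * n + 1).doubleFactorial : ℕ) : ℂ)
            * a ((n : ℤ) + 1) (2 * (n : ℤ) + 2))
          = ((n : ℂ) + 1) * (2 ^ (n + 1) * (m.choose (n + 1) : ℂ) * a 0 0) := by
        linear_combination (((2 * n + 1).doubleFactorial : ℕ) : ℂ) * h
          + 2 * ((m : ℂ) - n) * ihtop' - (2 : ℂ) ^ (n + 1) * a 0 0 * hchoose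
      have h3 := mul_left_cancel₀ hn1 h2'
      rw [div_mul_eq_mul_div, div_mul_eq_mul_div, eq_div_iff (mul_ne_zero h23 hD)]
      linear_combination h3
    · -- constant coefficient
      have h := key n (by omega) 0 Even.zero le_rfl
      have hneg : a (n : ℤ) (0 - 2) = 0 := hzero _ _ (by omega)
      rw [hneg] at h
      rw [eidx]
      push_cast at h ⊢
      have h2' : ((n : ℂ) + 1) * a ((n : ℤ) + 1) 0
          = ((n : ℂ) + 1) * ((-1 : ℂ) ^ (n + 1) * (m.choose (n + 1) : ℂ) * a 0 0) := by
        linear_combination h - ((m : ℂ) - n) * ihconst + (-1 : ℂ) ^ n * a 0 0 * hchoose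
      exact mul_left_cancel₀ hn1 h2'
end
end

section
/- Suppose complex numbers a^r_k (0 ≤ r ≤ m, k even, zero for k < 0) satisfy the odd twistor recursion (m−p)·k·a^{m−p}_k + (p+1)·k·a^{m−1−p}_k − 2(p+1)a^{m−1−p}_{k−2} = 0 for all p = 0,…,m−1 and even k ≥ 0. Then they also satisfy the odd D_s² recursion: (m−p)(m−p−1)(k+2)(k+3)a^{m−p}_{k+2} + (m−1−p)(p+1)(2(k+2)(k+3)a^{m−1−p}_{k+2} − 2(2k+3)a^{m−1−p}_k) + (p+1)(p+2)((k+2)(k+3)a^{m−2−p}_{k+2} − 2(2k+3)a^{m−2−p}_k + 4a^{m−2−p}_{k−2}) = 0 for all p = 0,…,m−2 and even k ≥ 0. -/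
/-!
The odd $D_s^2$ relation at $(p, k)$ is, identically in the coefficients $a^r_k$, the combination
$(m-1-p)(k+3)\,T_{p,k+2} + (p+1)(k+3)\,T_{p+1,k+2} - 2(p+1)\,T_{p+1,k}$ of odd twistor relations,
all of which lie in the range where the twistor recursion is assumed.
-/

namespace OddRecursion

variable {R : Type*} [CommRing R]

def twistorRelation (m : ℕ) (a : ℤ → ℤ → R) (p k : ℤ) : R :=
  (((m : ℤ) - p : ℤ) : R) * (k : R) * a ((m : ℤ) - p) k
    + ((p : R) + 1) * (k : R) * a ((m : ℤ) - 1 - p) k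
    - 2 * ((p : R) + 1) * a ((m : ℤ) - 1 - p) (k - 2)

def dsSquaredRelation (m : ℕ) (a : ℤ → ℤ → R) (p k : ℤ) : R :=
  (((m : ℤ) - p : ℤ) : R) * (((m : ℤ) - p - 1 : ℤ) : R) * ((k : R) + 2) * ((k : R) + 3)
      * a ((m : ℤ) - p) (k + 2)
    + (((m : ℤ) - 1 - p : ℤ) : R) * ((p : R) + 1) *
      (2 * ((k : R) + 2) * ((k : R) + 3) * a ((m : ℤ) - 1 - p) (k + 2)
        - 2 * (2 * (k : R) + 3) * a ((m : ℤ) - 1 - p) k)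
    + ((p : R) + 1) * ((p : R) + 2) *
      (((k : R) + 2) * ((k : R) + 3) * a ((m : ℤ) - 2 - p) (k + 2)
        - 2 * (2 * (k : R) + 3) * a ((m : ℤ) - 2 - p) k
        + 4 * a ((m : ℤ) - 2 - p) (k - 2))

theorem dsSquaredRelation_eq_twistorRelation_combination (m : ℕ) (a : ℤ → ℤ → R) (p k : ℤ) :
    dsSquaredRelation m a p k =
      ((m : R) - 1 - p) * ((k : R) + 3) * twistorRelation m a p (k + 2)
        + ((p : R) + 1) * ((k : R) + 3) * twistorRelation m a (p + 1) (k + 2)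
        - 2 * ((p : R) + 1) * twistorRelation m a (p + 1) k := by
  have hshift₁ : (m : ℤ) - (p + 1) = (m : ℤ) - 1 - p := by ring
  have hshift₂ : (m : ℤ) - 1 - (p + 1) = (m : ℤ) - 2 - p := by ring
  have hshift₃ : k + 2 - 2 = k := by ring
  simp only [dsSquaredRelation, twistorRelation, hshift₁, hshift₂, hshift₃]
  push_cast
  ring

end OddRecursion

open OddRecursion in
theorem odd_twistor_recursion_implies_DsSquared_recursion_general
    (m : ℕ) (a : ℤ → ℤ → ℂ)
    (htwistor : ∀ p : ℤ, 0 ≤ p → p ≤ (m : ℤ) - 1 → ∀ k : ℤ, Even k → 0 ≤ k →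
      (((m : ℤ) - p : ℤ) : ℂ) * (k : ℂ) * a ((m : ℤ) - p) k
        + ((p : ℂ) + 1) * (k : ℂ) * a ((m : ℤ) - 1 - p) k
        - 2 * ((p : ℂ) + 1) * a ((m : ℤ) - 1 - p) (k - 2) = 0) :
    ∀ p : ℤ, 0 ≤ p → p ≤ (m : ℤ) - 2 → ∀ k : ℤ, Even k → 0 ≤ k →
      (((m : ℤ) - p : ℤ) : ℂ) * (((m : ℤ) - p - 1 : ℤ) : ℂ) * ((k : ℂ) + 2) * ((k : ℂ) + 3)
          * a ((m : ℤ) - p) (k + 2)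
        + (((m : ℤ) - 1 - p : ℤ) : ℂ) * ((p : ℂ) + 1) *
          (2 * ((k : ℂ) + 2) * ((k : ℂ) + 3) * a ((m : ℤ) - 1 - p) (k + 2)
            - 2 * (2 * (k : ℂ) + 3) * a ((m : ℤ) - 1 - p) k)
        + ((p : ℂ) + 1) * ((p : ℂ) + 2) *
          (((k : ℂ) + 2) * ((k : ℂ) + 3) * a ((m : ℤ) - 2 - p) (k + 2)
            - 2 * (2 * (k : ℂ) + 3) * a ((m : ℤ) - 2 - p) k
            + 4 * a ((m : ℤ) - 2 - p) (k - 2)) = 0 := by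
  intro p hp hpm k hk hk0
  have hk₂ : Even (k + 2) := hk.add even_two
  have hT₁ : twistorRelation m a p (k + 2) = 0 := htwistor p hp (by omega) _ hk₂ (by omega)
  have hT₂ : twistorRelation m a (p + 1) (k + 2) = 0 :=
    htwistor (p + 1) (by omega) (by omega) _ hk₂ (by omega)
  have hT₃ : twistorRelation m a (p + 1) k = 0 := htwistor (p + 1) (by omega) (by omega) k hk hk0
  change dsSquaredRelation m a p k = 0
  rw [dsSquaredRelation_eq_twistorRelation_combination, hT₁, hT₂, hT₃]
  ring

theorem odd_twistor_recursion_implies_DsSquared_recursion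
    (m : ℕ) (hm : 2 ≤ m) (a : ℤ → ℤ → ℂ)
    (hzero : ∀ r k : ℤ, (r < 0 ∨ (m : ℤ) < r ∨ k < 0) → a r k = 0)
    (htwistor : ∀ p : ℤ, 0 ≤ p → p ≤ (m : ℤ) - 1 → ∀ k : ℤ, Even k → 0 ≤ k →
      (((m : ℤ) - p : ℤ) : ℂ) * (k : ℂ) * a ((m : ℤ) - p) k
        + ((p : ℂ) + 1) * (k : ℂ) * a ((m : ℤ) - 1 - p) k
        - 2 * ((p : ℂ) + 1) * a ((m : ℤ) - 1 - p) (k - 2) = 0) :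
    ∀ p : ℤ, 0 ≤ p → p ≤ (m : ℤ) - 2 → ∀ k : ℤ, Even k → 0 ≤ k →
      (((m : ℤ) - p : ℤ) : ℂ) * (((m : ℤ) - p - 1 : ℤ) : ℂ) * ((k : ℂ) + 2) * ((k : ℂ) + 3)
          * a ((m : ℤ) - p) (k + 2)
        + (((m : ℤ) - 1 - p : ℤ) : ℂ) * ((p : ℂ) + 1) *
          (2 * ((k : ℂ) + 2) * ((k : ℂ) + 3) * a ((m : ℤ) - 1 - p) (k + 2)
            - 2 * (2 * (k : ℂ) + 3) * a ((m : ℤ) - 1 - p) k)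
        + ((p : ℂ) + 1) * ((p : ℂ) + 2) *
          (((k : ℂ) + 2) * ((k : ℂ) + 3) * a ((m : ℤ) - 2 - p) (k + 2)
            - 2 * (2 * (k : ℂ) + 3) * a ((m : ℤ) - 2 - p) k
            + 4 * a ((m : ℤ) - 2 - p) (k - 2)) = 0 :=
  odd_twistor_recursion_implies_DsSquared_recursion_general m a htwistor
end

section
/- Suppose complex numbers a^r_k (0 ≤ r ≤ m, k even, zero for k < 0) satisfy the Dirac recursion (m−p)(k+1)a^{m−p}_k + (p+1)(k+1)a^{m−1−p}_k − 2(p+1)a^{m−1−p}_{k−2} = 0 for all p = 0,…,m−1 and even k ≥ 0. Define b^r_k = 2a^{r−1}_{k−2} + (k+1)(a^r_k − a^{r−1}_k) for 0 ≤ r ≤ m+1 (with a^r_k = 0 when r is out of range or k < 0). Then the b^r_k satisfy the twistor recursion (m+1−p)(k−1)b^{m+1−p}_k + (p+1)(k−1)b^{m−p}_k − 2(p+1)b^{m−p}_{k−2} = 0 for all p = 0,…,m and even k ≥ 0. -/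
/-!
The twistor expression of `b = X_s a` is the combination
`(k - 1) D(p - 1, k) - (k - 1) D(p, k) + 2 D(p, k - 2)` of Dirac expressions of `a`.
The Dirac expressions vanish for every `p` and every even `k`: inside the range by hypothesis, and
outside it because every term has either a coefficient `m - p` or `p + 1` that is zero or a
coefficient of `a` outside its support.
-/

namespace SymplecticSpinor

def SupportedIn (m : ℤ) (a : ℤ → ℤ → ℂ) : Prop :=
  ∀ r k : ℤ, (r < 0 ∨ m < r ∨ k < 0) → a r k = 0

def diracExpr (m : ℤ) (a : ℤ → ℤ → ℂ) (p k : ℤ) : ℂ :=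
  ((m - p : ℤ) : ℂ) * ((k : ℂ) + 1) * a (m - p) k
    + ((p : ℂ) + 1) * ((k : ℂ) + 1) * a (m - 1 - p) k
    - 2 * ((p : ℂ) + 1) * a (m - 1 - p) (k - 2)

def twistorExpr (m : ℤ) (b : ℤ → ℤ → ℂ) (p k : ℤ) : ℂ :=
  ((m + 1 - p : ℤ) : ℂ) * ((k : ℂ) - 1) * b (m + 1 - p) k
    + ((p : ℂ) + 1) * ((k : ℂ) - 1) * b (m - p) k
    - 2 * ((p : ℂ) + 1) * b (m - p) (k - 2)

/-- Coefficients of `X_s = (i/2)((q - ∂_q) z + (q + ∂_q) z̄)` applied to the spinor with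
coefficients `a`. -/
def Xs (a : ℤ → ℤ → ℂ) (r k : ℤ) : ℂ :=
  2 * a (r - 1) (k - 2) + ((k : ℂ) + 1) * (a r k - a (r - 1) k)

theorem twistorExpr_Xs (m : ℤ) (a : ℤ → ℤ → ℂ) (p k : ℤ) :
    twistorExpr m (Xs a) p k =
      ((k : ℂ) - 1) * diracExpr m a (p - 1) k - ((k : ℂ) - 1) * diracExpr m a p k
        + 2 * diracExpr m a p (k - 2) := by
  simp only [twistorExpr, diracExpr, Xs]
  rw [show m + 1 - p - 1 = m - p by ring, show m - p - 1 = m - 1 - p by ring,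
    show m - (p - 1) = m + 1 - p by ring, show m - 1 - (p - 1) = m - p by ring]
  push_cast
  ring

variable {m : ℤ} {a : ℤ → ℤ → ℂ}

theorem SupportedIn.intCast_mul_eq_zero (ha : SupportedIn m a) {c r k : ℤ}
    (h : c = 0 ∨ r < 0 ∨ m < r ∨ k < 0) : (c : ℂ) * a r k = 0 := by
  rcases h with rfl | h
  · rw [Int.cast_zero, zero_mul]
  · rw [ha r k h, mul_zero]

theorem SupportedIn.diracExpr_eq_zero (ha : SupportedIn m a) {p k : ℤ}
    (h : p < 0 ∨ m ≤ p ∨ k < 0) : diracExpr m a p k = 0 := by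
  have h₁ := ha.intCast_mul_eq_zero (c := m - p) (r := m - p) (k := k) (by omega)
  have h₂ := ha.intCast_mul_eq_zero (c := p + 1) (r := m - 1 - p) (k := k) (by omega)
  have h₃ := ha.intCast_mul_eq_zero (c := p + 1) (r := m - 1 - p) (k := k - 2) (by omega)
  push_cast at h₂ h₃
  rw [diracExpr]
  linear_combination ((k : ℂ) + 1) * h₁ + ((k : ℂ) + 1) * h₂ - 2 * h₃

theorem SupportedIn.diracExpr_eq_zero_of_even (ha : SupportedIn m a)
    (hdirac : ∀ p : ℤ, 0 ≤ p → p ≤ m - 1 → ∀ k : ℤ, Even k → 0 ≤ k → diracExpr m a p k = 0)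
    {p k : ℤ} (hk : Even k) : diracExpr m a p k = 0 := by
  by_cases hin : 0 ≤ p ∧ p ≤ m - 1 ∧ 0 ≤ k
  · exact hdirac p hin.1 hin.2.1 k hk hin.2.2
  · exact ha.diracExpr_eq_zero (by omega)

theorem SupportedIn.twistorExpr_Xs_eq_zero (ha : SupportedIn m a)
    (hdirac : ∀ p : ℤ, 0 ≤ p → p ≤ m - 1 → ∀ k : ℤ, Even k → 0 ≤ k → diracExpr m a p k = 0)
    {p k : ℤ} (hk : Even k) : twistorExpr m (Xs a) p k = 0 := by
  have hk₂ : Even (k - 2) := hk.sub even_two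
  rw [twistorExpr_Xs, ha.diracExpr_eq_zero_of_even hdirac hk,
    ha.diracExpr_eq_zero_of_even hdirac hk, ha.diracExpr_eq_zero_of_even hdirac hk₂]
  ring

end SymplecticSpinor

theorem Xs_maps_dirac_kernel_to_twistor_kernel_general
    (m : ℕ) (a b : ℤ → ℤ → ℂ)
    (hzero : ∀ r k : ℤ, (r < 0 ∨ (m : ℤ) < r ∨ k < 0) → a r k = 0)
    (hdirac : ∀ p : ℤ, 0 ≤ p → p ≤ (m : ℤ) - 1 → ∀ k : ℤ, Even k → 0 ≤ k →
      (((m : ℤ) - p : ℤ) : ℂ) * ((k : ℂ) + 1) * a ((m : ℤ) - p) k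
        + ((p : ℂ) + 1) * ((k : ℂ) + 1) * a ((m : ℤ) - 1 - p) k
        - 2 * ((p : ℂ) + 1) * a ((m : ℤ) - 1 - p) (k - 2) = 0)
    (hb : ∀ r k : ℤ,
      b r k = 2 * a (r - 1) (k - 2) + ((k : ℂ) + 1) * (a r k - a (r - 1) k)) :
    ∀ p : ℤ, 0 ≤ p → p ≤ (m : ℤ) → ∀ k : ℤ, Even k → 0 ≤ k →
      (((m : ℤ) + 1 - p : ℤ) : ℂ) * ((k : ℂ) - 1) * b ((m : ℤ) + 1 - p) k
        + ((p : ℂ) + 1) * ((k : ℂ) - 1) * b ((m : ℤ) - p) k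
        - 2 * ((p : ℂ) + 1) * b ((m : ℤ) - p) (k - 2) = 0 := by
  obtain rfl : b = SymplecticSpinor.Xs a := funext fun r => funext (hb r)
  intro p _ _ k hk _
  exact SymplecticSpinor.SupportedIn.twistorExpr_Xs_eq_zero (m := m) hzero hdirac hk

theorem Xs_maps_dirac_kernel_to_twistor_kernel
    (m : ℕ) (hm : 1 ≤ m) (a b : ℤ → ℤ → ℂ)
    (hzero : ∀ r k : ℤ, (r < 0 ∨ (m : ℤ) < r ∨ k < 0) → a r k = 0)
    (hdirac : ∀ p : ℤ, 0 ≤ p → p ≤ (m : ℤ) - 1 → ∀ k : ℤ, Even k → 0 ≤ k →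
      (((m : ℤ) - p : ℤ) : ℂ) * ((k : ℂ) + 1) * a ((m : ℤ) - p) k
        + ((p : ℂ) + 1) * ((k : ℂ) + 1) * a ((m : ℤ) - 1 - p) k
        - 2 * ((p : ℂ) + 1) * a ((m : ℤ) - 1 - p) (k - 2) = 0)
    (hb : ∀ r k : ℤ,
      b r k = 2 * a (r - 1) (k - 2) + ((k : ℂ) + 1) * (a r k - a (r - 1) k)) :
    ∀ p : ℤ, 0 ≤ p → p ≤ (m : ℤ) → ∀ k : ℤ, Even k → 0 ≤ k →
      (((m : ℤ) + 1 - p : ℤ) : ℂ) * ((k : ℂ) - 1) * b ((m : ℤ) + 1 - p) k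
        + ((p : ℂ) + 1) * ((k : ℂ) - 1) * b ((m : ℤ) - p) k
        - 2 * ((p : ℂ) + 1) * b ((m : ℤ) - p) (k - 2) = 0 :=
  Xs_maps_dirac_kernel_to_twistor_kernel_general m a b hzero hdirac hb
end
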